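/- arXiv:2506.01198 — 7 statements merged into one kernel-verified Lean document; each statement's English description precedes it below -/
import Mathlib

section
/- Let G be a finite group, S a nonempty generating set of G consisting of elements of order 2 that is a union of conjugacy classes, and let g be the Lie subalgebra of ℂ[G] (with commutator bracket) generated by S. Then the center Z(g) of g equals g ∩ Z(ℂ[G]). -/
attribute [local instance 100] LieRing.ofAssociativeRing

/-- Let `G` be a finite group and `S` a nonempty generating set of `G`
consisting of elements of order 2 that is a union of conjugacy classes.  Let `𝔤` be the Lie
subalgebra of `ℂ[G]` (with the commutator bracket) generated by `S`.  Then the center of `𝔤`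
equals `𝔤 ∩ Z(ℂ[G])`. -/
theorem stmt0 {G : Type*} [Group G] [Fintype G] (S : Set G)
    (hne : S.Nonempty)
    (hgen : Subgroup.closure S = ⊤)
    (h2 : ∀ s ∈ S, orderOf s = 2)
    (hconj : ∀ s ∈ S, ∀ g : G, g * s * g⁻¹ ∈ S) :
    {z : MonoidAlgebra ℂ G |
        z ∈ LieSubalgebra.lieSpan ℂ (MonoidAlgebra ℂ G) (MonoidAlgebra.of ℂ G '' S) ∧
        ∀ y ∈ LieSubalgebra.lieSpan ℂ (MonoidAlgebra ℂ G) (MonoidAlgebra.of ℂ G '' S),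
          ⁅z, y⁆ = 0} =
      ↑(LieSubalgebra.lieSpan ℂ (MonoidAlgebra ℂ G) (MonoidAlgebra.of ℂ G '' S)) ∩
        Set.center (MonoidAlgebra ℂ G) := by
  ext z
  simp only [Set.mem_setOf_eq, Set.mem_inter_iff, SetLike.mem_coe]
  constructor
  · rintro ⟨hz, hcomm⟩
    refine ⟨hz, Semigroup.mem_center_iff.mpr fun b => ?_⟩
    have key : ∀ g : G, (MonoidAlgebra.of ℂ G g) * z = z * (MonoidAlgebra.of ℂ G g) := by
      intro g
      have hg : g ∈ Subgroup.closure S := by rw [hgen]; trivial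
      induction hg using Subgroup.closure_induction with
      | mem s hs =>
        have h := hcomm (MonoidAlgebra.of ℂ G s)
          (LieSubalgebra.subset_lieSpan ⟨s, hs, rfl⟩)
        rw [Ring.lie_def, sub_eq_zero] at h
        exact h.symm
      | one => rw [map_one, one_mul, mul_one]
      | mul a b ha hb hpa hpb =>
        rw [map_mul, mul_assoc, hpb, ← mul_assoc, hpa, mul_assoc]
      | inv a ha hpa =>
        have h1 : (MonoidAlgebra.of ℂ G a⁻¹) * (MonoidAlgebra.of ℂ G a) = 1 := by
          rw [← map_mul, inv_mul_cancel, map_one]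
        have h2' : (MonoidAlgebra.of ℂ G a) * (MonoidAlgebra.of ℂ G a⁻¹) = 1 := by
          rw [← map_mul, mul_inv_cancel, map_one]
        calc (MonoidAlgebra.of ℂ G a⁻¹) * z
            = (MonoidAlgebra.of ℂ G a⁻¹) * z *
              ((MonoidAlgebra.of ℂ G a) * (MonoidAlgebra.of ℂ G a⁻¹)) := by rw [h2', mul_one]
          _ = (MonoidAlgebra.of ℂ G a⁻¹) * (z * (MonoidAlgebra.of ℂ G a)) *
              (MonoidAlgebra.of ℂ G a⁻¹) := by simp only [mul_assoc]
          _ = (MonoidAlgebra.of ℂ G a⁻¹) * ((MonoidAlgebra.of ℂ G a) * z) *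
              (MonoidAlgebra.of ℂ G a⁻¹) := by rw [hpa]
          _ = ((MonoidAlgebra.of ℂ G a⁻¹) * (MonoidAlgebra.of ℂ G a)) *
              (z * (MonoidAlgebra.of ℂ G a⁻¹)) := by simp only [mul_assoc]
          _ = z * (MonoidAlgebra.of ℂ G a⁻¹) := by rw [h1, one_mul]
    induction b using MonoidAlgebra.induction_on with
    | of g => exact key g
    | add f g hf hg => rw [add_mul, mul_add, hf, hg]
    | smul r f hf => rw [smul_mul_assoc, mul_smul_comm, hf]
  · rintro ⟨hz, hc⟩
    refine ⟨hz, fun y _ => ?_⟩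
    rw [Ring.lie_def, (Semigroup.mem_center_iff.mp hc) y, sub_self]
end

section
/- Let G be a finite group, S a nonempty generating set of G consisting of elements of order 2 that is a union of conjugacy classes, and g the Lie subalgebra of ℂ[G] generated by S. Then the averaging projection p: ℂ[G] → Z(ℂ[G]) defined by p(z) = (1/|G|) Σ_{g∈G} g z g⁻¹ maps g into Z(g). -/
attribute [local instance 100] LieRing.ofAssociativeRing

/-- With `G`, `S`, and the Lie subalgebra `𝔤` of `ℂ[G]` generated by `S` as
usual (S nonempty, generating, consisting of order-2 elements, and a union of conjugacy
classes), the averaging projection `p(z) = (1/|G|) Σ_{g∈G} g z g⁻¹` maps `𝔤` into the Lie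
center of `𝔤`. -/
theorem stmt1 {G : Type*} [Group G] [Fintype G] (S : Set G)
    (hne : S.Nonempty)
    (hgen : Subgroup.closure S = ⊤)
    (h2 : ∀ s ∈ S, orderOf s = 2)
    (hconj : ∀ s ∈ S, ∀ g : G, g * s * g⁻¹ ∈ S) :
    ∀ z ∈ LieSubalgebra.lieSpan ℂ (MonoidAlgebra ℂ G) (MonoidAlgebra.of ℂ G '' S),
      ((Fintype.card G : ℂ)⁻¹ •
          ∑ g : G, MonoidAlgebra.of ℂ G g * z * MonoidAlgebra.of ℂ G g⁻¹) ∈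
        LieSubalgebra.lieSpan ℂ (MonoidAlgebra ℂ G) (MonoidAlgebra.of ℂ G '' S) ∧
      ∀ y ∈ LieSubalgebra.lieSpan ℂ (MonoidAlgebra ℂ G) (MonoidAlgebra.of ℂ G '' S),
        ⁅(Fintype.card G : ℂ)⁻¹ •
            ∑ g : G, MonoidAlgebra.of ℂ G g * z * MonoidAlgebra.of ℂ G g⁻¹, y⁆ = 0 := by
  intro z hz
  set 𝔤 := LieSubalgebra.lieSpan ℂ (MonoidAlgebra ℂ G) (MonoidAlgebra.of ℂ G '' S) with h𝔤
  -- conjugation preserves 𝔤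
  have conj_mem : ∀ (g : G) (x : MonoidAlgebra ℂ G), x ∈ 𝔤 →
      MonoidAlgebra.of ℂ G g * x * MonoidAlgebra.of ℂ G g⁻¹ ∈ 𝔤 := by
    intro g x hx
    have hinv : ∀ w : MonoidAlgebra ℂ G,
        MonoidAlgebra.of ℂ G g⁻¹ * (MonoidAlgebra.of ℂ G g * w) = w := by
      intro w
      rw [← mul_assoc, ← map_mul, inv_mul_cancel, map_one, one_mul]
    refine LieSubalgebra.lieSpan_induction (R := ℂ)
        (p := fun w _ => MonoidAlgebra.of ℂ G g * w * MonoidAlgebra.of ℂ G g⁻¹ ∈ 𝔤) ?_ ?_ ?_ ?_ ?_ hx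
    · rintro _ ⟨s, hsS, rfl⟩
      have : MonoidAlgebra.of ℂ G g * MonoidAlgebra.of ℂ G s * MonoidAlgebra.of ℂ G g⁻¹ =
          MonoidAlgebra.of ℂ G (g * s * g⁻¹) := by rw [← map_mul, ← map_mul]
      rw [this]
      exact LieSubalgebra.subset_lieSpan ⟨g * s * g⁻¹, hconj s hsS g, rfl⟩
    · simpa using 𝔤.zero_mem
    · intro x y _ _ hx' hy'
      rw [mul_add, add_mul]
      exact 𝔤.add_mem hx' hy'
    · intro r x _ hx
      rw [mul_smul_comm, smul_mul_assoc]
      exact 𝔤.smul_mem r hx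
    · intro x y _ _ hx' hy'
      have key : MonoidAlgebra.of ℂ G g * ⁅x, y⁆ * MonoidAlgebra.of ℂ G g⁻¹ =
          ⁅MonoidAlgebra.of ℂ G g * x * MonoidAlgebra.of ℂ G g⁻¹,
            MonoidAlgebra.of ℂ G g * y * MonoidAlgebra.of ℂ G g⁻¹⁆ := by
        simp only [Ring.lie_def, mul_sub, sub_mul, mul_assoc, hinv]
      rw [key]
      exact 𝔤.lie_mem hx' hy'
  set P : MonoidAlgebra ℂ G :=
    ∑ g : G, MonoidAlgebra.of ℂ G g * z * MonoidAlgebra.of ℂ G g⁻¹ with hP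
  have hPmem : P ∈ 𝔤 := Submodule.sum_mem _ fun g _ => conj_mem g z hz
  -- P is central
  have hPof : ∀ h : G, MonoidAlgebra.of ℂ G h * P = P * MonoidAlgebra.of ℂ G h := by
    intro h
    have h1 : MonoidAlgebra.of ℂ G h⁻¹ * MonoidAlgebra.of ℂ G h = 1 := by
      rw [← map_mul, inv_mul_cancel, map_one]
    rw [hP, Finset.mul_sum, Finset.sum_mul]
    refine Fintype.sum_equiv (Equiv.mulLeft h) _ _ fun g => ?_
    simp only [Equiv.coe_mulLeft, mul_inv_rev, map_mul, mul_assoc, h1, mul_one]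
  have hPcomm : ∀ w : MonoidAlgebra ℂ G, P * w = w * P := by
    intro w
    induction w using MonoidAlgebra.induction_on with
    | of g => exact (hPof g).symm
    | add f g hf hg => rw [mul_add, add_mul, hf, hg]
    | smul r f hf => rw [mul_smul_comm, smul_mul_assoc, hf]
  refine ⟨𝔤.smul_mem _ hPmem, fun y _ => ?_⟩
  rw [Ring.lie_def, smul_mul_assoc, mul_smul_comm, hPcomm y, sub_self]
end

section
/- Let G be a finite group, S a nonempty generating set of G consisting of elements of order 2 that is a union of conjugacy classes C₁,…,C_t, and g the Lie subalgebra of ℂ[G] generated by S. Then the center of g is spanned by the class sums T_i = Σ_{c∈C_i} c for i = 1,…,t. -/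
open scoped Classical

attribute [local instance 100] LieRing.ofAssociativeRing

section Stmt3Aux
set_option linter.unusedSectionVars false

variable {G : Type*} [Group G] [Fintype G]

open MonoidAlgebra Finsupp

/-- The class sum of `g`. -/
noncomputable def Tsum (g : G) : MonoidAlgebra ℂ G :=
  ∑ c ∈ Finset.univ.filter (fun c => IsConj g c), MonoidAlgebra.of ℂ G c

lemma mem_classF {g c : G} :
    c ∈ Finset.univ.filter (fun c => IsConj g c) ↔ IsConj g c := by
  simp

lemma Tsum_comm (g : G) (a : MonoidAlgebra ℂ G) : Tsum g * a = a * Tsum g := by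
  induction a using MonoidAlgebra.induction_on with
  | of h =>
    simp only [Tsum, Finset.sum_mul, Finset.mul_sum, MonoidAlgebra.of_apply,
      MonoidAlgebra.single_mul_single, one_mul, mul_one]
    refine Finset.sum_nbij' (fun c => h⁻¹ * c * h) (fun c => h * c * h⁻¹) ?_ ?_ ?_ ?_ ?_
    · intro c hc
      rw [mem_classF] at hc ⊢
      exact hc.trans (isConj_iff.mpr ⟨h⁻¹, by group⟩)
    · intro c hc
      rw [mem_classF] at hc ⊢
      exact hc.trans (isConj_iff.mpr ⟨h, by group⟩)
    · intro c _; group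
    · intro c _; group
    · intro c _; congr 1; group
  | add f g hf hg => rw [mul_add, add_mul, hf, hg]
  | smul r f hf => rw [mul_smul_comm, smul_mul_assoc, hf]

lemma Tsum_apply (g h : G) : (Tsum g).coeff h = if IsConj g h then 1 else 0 := by
  rw [Tsum, MonoidAlgebra.coeff_sum, Finsupp.finset_sum_apply]
  simp only [MonoidAlgebra.of_apply, MonoidAlgebra.coeff_single, Finsupp.single_apply]
  rw [Finset.sum_ite_eq', if_congr mem_classF rfl rfl]

lemma mul_apply_one_comm (x y : MonoidAlgebra ℂ G) : (x * y).coeff 1 = (y * x).coeff 1 := by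
  rw [MonoidAlgebra.coeff_mul_apply_left, MonoidAlgebra.coeff_mul_apply_left]
  rw [Finsupp.sum_fintype _ _ (fun a => by simp), Finsupp.sum_fintype _ _ (fun a => by simp)]
  rw [← Equiv.sum_comp (Equiv.inv G) (fun a => x.coeff a * y.coeff (a⁻¹ * 1))]
  simp [mul_comm]

lemma central_apply_conj {z : MonoidAlgebra ℂ G} (hz : ∀ a, z * a = a * z) (k g : G) :
    z.coeff (k * g * k⁻¹) = z.coeff g := by
  have h : (z * MonoidAlgebra.of ℂ G k).coeff (k * g) = (MonoidAlgebra.of ℂ G k * z).coeff (k * g) := by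
    rw [hz]
  rw [MonoidAlgebra.of_apply, MonoidAlgebra.coeff_mul_single_apply,
    MonoidAlgebra.coeff_single_mul_apply] at h
  simpa [mul_assoc] using h

/-- The span of commutators. -/
noncomputable def commSpan (G : Type*) [Group G] [Fintype G] : Submodule ℂ (MonoidAlgebra ℂ G) :=
  Submodule.span ℂ {w : MonoidAlgebra ℂ G | ∃ x y : MonoidAlgebra ℂ G, ⁅x, y⁆ = w}

lemma commSpan_mul_Tsum_apply_one {d : MonoidAlgebra ℂ G} (hd : d ∈ commSpan G) (g : G) :
    (d * Tsum g).coeff 1 = 0 := by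
  unfold commSpan at hd
  induction hd using Submodule.span_induction with
  | mem w hw =>
    obtain ⟨x, y, rfl⟩ := hw
    have h1 : ⁅x, y⁆ * Tsum g = x * (y * Tsum g) - (y * Tsum g) * x := by
      rw [Ring.lie_def, sub_mul, mul_assoc, mul_assoc, ← Tsum_comm g x, ← mul_assoc y]
    rw [h1, MonoidAlgebra.coeff_sub, Finsupp.sub_apply, mul_apply_one_comm, sub_self]
  | zero => simp
  | add a b _ _ ha hb => rw [add_mul, MonoidAlgebra.coeff_add, Finsupp.add_apply, ha, hb, add_zero]
  | smul r a _ ha => rw [smul_mul_assoc, MonoidAlgebra.coeff_smul, Finsupp.smul_apply, ha, smul_zero]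

lemma commSpan_classsum_zero {d : MonoidAlgebra ℂ G} (hd : d ∈ commSpan G) (g : G) :
    ∑ c ∈ Finset.univ.filter (fun c => IsConj g c), d.coeff c = 0 := by
  have h := commSpan_mul_Tsum_apply_one hd g⁻¹
  rw [Tsum, Finset.mul_sum] at h
  simp only [MonoidAlgebra.of_apply] at h
  rw [MonoidAlgebra.coeff_sum, Finsupp.finset_sum_apply] at h
  simp only [MonoidAlgebra.coeff_mul_single_apply, one_mul, mul_one] at h
  rw [← h]
  refine Finset.sum_nbij' (fun c => c⁻¹) (fun c => c⁻¹) ?_ ?_ ?_ ?_ ?_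
  · intro c hc
    rw [mem_classF] at hc ⊢
    obtain ⟨k, hk⟩ := isConj_iff.mp hc
    exact isConj_iff.mpr ⟨k, by rw [← hk]; group⟩
  · intro c hc
    rw [mem_classF] at hc ⊢
    obtain ⟨k, hk⟩ := isConj_iff.mp hc
    exact isConj_iff.mpr ⟨k, by rw [← hk]; group⟩
  · intro c _; simp
  · intro c _; simp
  · intro c _; simp

/-- support lemma -/
lemma span_of_support {S : Set G} {x : MonoidAlgebra ℂ G}
    (hx : x ∈ Submodule.span ℂ (MonoidAlgebra.of ℂ G '' S)) :
    ∀ c ∉ S, x.coeff c = 0 := by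
  induction hx using Submodule.span_induction with
  | mem w hw =>
    obtain ⟨s, hs, rfl⟩ := hw
    intro c hc
    rw [MonoidAlgebra.of_apply, MonoidAlgebra.coeff_single, Finsupp.single_apply, if_neg]
    rintro rfl; exact hc hs
  | zero => intro c _; simp
  | add a b _ _ ha hb => intro c hc; rw [MonoidAlgebra.coeff_add, Finsupp.add_apply, ha c hc, hb c hc, add_zero]
  | smul r a _ ha => intro c hc; rw [MonoidAlgebra.coeff_smul, Finsupp.smul_apply, ha c hc, smul_zero]

/-- The subalgebra `span S ⊔ commutators` as a Lie subalgebra. -/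
noncomputable def Kalg (S : Set G) : LieSubalgebra ℂ (MonoidAlgebra ℂ G) :=
  { Submodule.span ℂ (MonoidAlgebra.of ℂ G '' S) ⊔ commSpan G with
    lie_mem' := fun {x y} _ _ =>
      Submodule.mem_sup_right (Submodule.subset_span ⟨x, y, rfl⟩) }

lemma lieSpan_decomp {S : Set G} {z : MonoidAlgebra ℂ G}
    (hz : z ∈ LieSubalgebra.lieSpan ℂ (MonoidAlgebra ℂ G) (MonoidAlgebra.of ℂ G '' S)) :
    ∃ x ∈ Submodule.span ℂ (MonoidAlgebra.of ℂ G '' S), ∃ d ∈ commSpan G, z = x + d := by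
  have h : LieSubalgebra.lieSpan ℂ (MonoidAlgebra ℂ G) (MonoidAlgebra.of ℂ G '' S) ≤ Kalg S :=
    (LieSubalgebra.lieSpan_le).mpr (fun w hw =>
      Submodule.mem_sup_left (Submodule.subset_span hw))
  have h2 : z ∈ Submodule.span ℂ (MonoidAlgebra.of ℂ G '' S) ⊔ commSpan G := h hz
  obtain ⟨x, hx, d, hd, hxd⟩ := Submodule.mem_sup.mp h2
  exact ⟨x, hx, d, hd, hxd.symm⟩

end Stmt3Aux

/-- Let `G` be a finite group and `S` a nonempty generating set of `G`
consisting of order-2 elements that is a union of conjugacy classes, and let `𝔤` be the Lie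
subalgebra of `ℂ[G]` generated by `S`.  Then the center of `𝔤` is spanned by the class sums
`T_s = Σ_{c conjugate to s} c` for `s ∈ S`. -/
theorem stmt3 {G : Type*} [Group G] [Fintype G] (S : Set G)
    (hne : S.Nonempty)
    (hgen : Subgroup.closure S = ⊤)
    (h2 : ∀ s ∈ S, orderOf s = 2)
    (hconj : ∀ s ∈ S, ∀ g : G, g * s * g⁻¹ ∈ S) :
    {z : MonoidAlgebra ℂ G |
        z ∈ LieSubalgebra.lieSpan ℂ (MonoidAlgebra ℂ G) (MonoidAlgebra.of ℂ G '' S) ∧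
        ∀ y ∈ LieSubalgebra.lieSpan ℂ (MonoidAlgebra ℂ G) (MonoidAlgebra.of ℂ G '' S),
          ⁅z, y⁆ = 0} =
      ↑(Submodule.span ℂ
        ((fun s => ∑ c ∈ Finset.univ.filter (fun c => IsConj s c),
            MonoidAlgebra.of ℂ G c) '' S)) := by
  have himg : (fun s => ∑ c ∈ Finset.univ.filter (fun c => IsConj s c),
      MonoidAlgebra.of ℂ G c) = fun s : G => Tsum s := rfl
  rw [himg]
  apply Set.eq_of_subset_of_subset
  · -- center ⊆ span of class sums
    rintro z ⟨hz𝔤, hzc⟩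
    -- z commutes with everything
    have hgencomm : ∀ s ∈ S, z * MonoidAlgebra.of ℂ G s = MonoidAlgebra.of ℂ G s * z := by
      intro s hs
      have h := hzc (MonoidAlgebra.of ℂ G s)
        (LieSubalgebra.subset_lieSpan ⟨s, hs, rfl⟩)
      rw [Ring.lie_def] at h
      exact sub_eq_zero.mp h
    have hcomm : ∀ a, z * a = a * z := by
      set H : Subgroup G :=
        { carrier := {g : G | z * MonoidAlgebra.of ℂ G g = MonoidAlgebra.of ℂ G g * z}
          one_mem' := by
            simp only [Set.mem_setOf_eq, map_one, mul_one, one_mul]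
          mul_mem' := by
            intro a b ha hb
            simp only [Set.mem_setOf_eq, map_mul] at ha hb ⊢
            rw [← mul_assoc, ha, mul_assoc, hb, ← mul_assoc]
          inv_mem' := by
            intro g hg
            simp only [Set.mem_setOf_eq] at hg ⊢
            have e1 : MonoidAlgebra.of ℂ G g⁻¹ * MonoidAlgebra.of ℂ G g = 1 := by
              rw [← map_mul, inv_mul_cancel, map_one]
            have e2 : MonoidAlgebra.of ℂ G g * MonoidAlgebra.of ℂ G g⁻¹ = 1 := by
              rw [← map_mul, mul_inv_cancel, map_one]
            have h4 : MonoidAlgebra.of ℂ G g⁻¹ * z = z * MonoidAlgebra.of ℂ G g⁻¹ := by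
              calc MonoidAlgebra.of ℂ G g⁻¹ * z
                  = MonoidAlgebra.of ℂ G g⁻¹ * z *
                    (MonoidAlgebra.of ℂ G g * MonoidAlgebra.of ℂ G g⁻¹) := by
                    rw [e2, mul_one]
                _ = MonoidAlgebra.of ℂ G g⁻¹ * (z * MonoidAlgebra.of ℂ G g) *
                    MonoidAlgebra.of ℂ G g⁻¹ := by simp only [mul_assoc]
                _ = MonoidAlgebra.of ℂ G g⁻¹ * (MonoidAlgebra.of ℂ G g * z) *
                    MonoidAlgebra.of ℂ G g⁻¹ := by rw [hg]
                _ = MonoidAlgebra.of ℂ G g⁻¹ * MonoidAlgebra.of ℂ G g *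
                    (z * MonoidAlgebra.of ℂ G g⁻¹) := by simp only [mul_assoc]
                _ = z * MonoidAlgebra.of ℂ G g⁻¹ := by rw [e1, one_mul]
            exact h4.symm }
      have hStop : ∀ g : G, g ∈ H := by
        have : Subgroup.closure S ≤ H := (Subgroup.closure_le H).mpr hgencomm
        rw [hgen] at this
        exact fun g => this (Subgroup.mem_top g)
      intro a
      induction a using MonoidAlgebra.induction_on with
      | of g => exact hStop g
      | add f g hf hg => rw [mul_add, add_mul, hf, hg]
      | smul r f hf => rw [mul_smul_comm, smul_mul_assoc, hf]
    -- class function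
    have hcf : ∀ g c : G, IsConj g c → z.coeff c = z.coeff g := by
      intro g c hgc
      obtain ⟨k, hk⟩ := isConj_iff.mp hgc
      rw [← hk]
      exact central_apply_conj hcomm k g
    -- decomposition
    obtain ⟨x, hxspan, d, hd, hzxd⟩ := lieSpan_decomp hz𝔤
    -- vanishing off S
    have hSzero : ∀ g, g ∉ S → z.coeff g = 0 := by
      intro g hg
      have hnotS : ∀ c, IsConj g c → c ∉ S := by
        intro c hgc hcS
        obtain ⟨k, hk⟩ := isConj_iff.mp hgc.symm
        exact hg (hk ▸ hconj c hcS k)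
      have hsum : ∑ c ∈ Finset.univ.filter (fun c => IsConj g c), z.coeff c = 0 := by
        rw [hzxd, Finset.sum_congr rfl (fun c _ => (by rw [MonoidAlgebra.coeff_add, Finsupp.add_apply] :
            (x + d).coeff c = x.coeff c + d.coeff c)),
          Finset.sum_add_distrib, commSpan_classsum_zero hd g, add_zero]
        exact Finset.sum_eq_zero fun c hc =>
          span_of_support hxspan c (hnotS c (mem_classF.mp hc))
      have hsum2 : ∑ c ∈ Finset.univ.filter (fun c => IsConj g c), z.coeff c =
          ((Finset.univ.filter (fun c => IsConj g c)).card : ℂ) * z.coeff g := by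
        rw [Finset.sum_congr rfl (fun c hc => hcf g c (mem_classF.mp hc)),
          Finset.sum_const, nsmul_eq_mul]
      rw [hsum] at hsum2
      have hcard : ((Finset.univ.filter (fun c => IsConj g c)).card : ℂ) ≠ 0 := by
        rw [Nat.cast_ne_zero]
        exact Finset.card_ne_zero_of_mem (mem_classF.mpr (IsConj.refl g))
      rcases mul_eq_zero.mp hsum2.symm with h | h
      · exact absurd h hcard
      · exact h
    -- expression of z as combination of class sums
    have hzeq : z = ∑ g : G,
        (((Finset.univ.filter (fun c => IsConj g c)).card : ℂ))⁻¹ • z.coeff g • Tsum g := by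
      ext h
      have happ : ∀ (a b : ℂ) (g : G),
          ((a • b • Tsum g : MonoidAlgebra ℂ G)).coeff h =
            a * (b * (if IsConj g h then 1 else 0)) := by
        intro a b g
        rw [MonoidAlgebra.coeff_smul_apply, MonoidAlgebra.coeff_smul_apply, Tsum_apply, smul_eq_mul, smul_eq_mul]
      rw [MonoidAlgebra.coeff_sum, Finsupp.finset_sum_apply, Finset.sum_congr rfl (fun g _ => happ _ _ g)]
      simp only [mul_ite, mul_one, mul_zero]
      rw [← Finset.sum_filter]
      have hterm : ∀ g ∈ Finset.univ.filter (fun g => IsConj g h),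
          (((Finset.univ.filter (fun c => IsConj g c)).card : ℂ))⁻¹ * z.coeff g =
          (((Finset.univ.filter (fun c => IsConj h c)).card : ℂ))⁻¹ * z.coeff h := by
        intro g hg
        replace hg : IsConj g h := (Finset.mem_filter.mp hg).2
        have hfil : Finset.univ.filter (fun c => IsConj g c) =
            Finset.univ.filter (fun c => IsConj h c) :=
          Finset.filter_congr fun c _ =>
            ⟨fun hx => hg.symm.trans hx, fun hx => hg.trans hx⟩
        rw [hfil, hcf h g hg.symm]
      rw [Finset.sum_congr rfl hterm, Finset.sum_const]
      have hfil2 : Finset.univ.filter (fun g => IsConj g h) =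
          Finset.univ.filter (fun c => IsConj h c) :=
        Finset.filter_congr fun c _ => isConj_comm
      rw [hfil2, nsmul_eq_mul, ← mul_assoc, mul_inv_cancel₀, one_mul]
      rw [Nat.cast_ne_zero]
      exact Finset.card_ne_zero_of_mem (mem_classF.mpr (IsConj.refl h))
    rw [SetLike.mem_coe, hzeq]
    refine Submodule.sum_mem _ fun g _ => ?_
    by_cases hg : g ∈ S
    · exact Submodule.smul_mem _ _ (Submodule.smul_mem _ _
        (Submodule.subset_span ⟨g, hg, rfl⟩))
    · rw [hSzero g hg, zero_smul, smul_zero]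
      exact Submodule.zero_mem _
  · -- span of class sums ⊆ center
    intro z hz
    rw [SetLike.mem_coe] at hz
    induction hz using Submodule.span_induction with
    | mem w hw =>
      obtain ⟨s, hs, rfl⟩ := hw
      constructor
      · refine sum_mem fun c hc => ?_
        rw [mem_classF] at hc
        obtain ⟨k, hk⟩ := isConj_iff.mp hc
        exact LieSubalgebra.subset_lieSpan ⟨c, hk ▸ hconj s hs k, rfl⟩
      · intro y _
        rw [Ring.lie_def, Tsum_comm, sub_self]
    | zero => exact ⟨zero_mem _, fun y _ => zero_lie y⟩
    | add a b _ _ ha hb =>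
      exact ⟨add_mem ha.1 hb.1, fun y hy => by rw [add_lie, ha.2 y hy, hb.2 y hy, add_zero]⟩
    | smul r a _ ha =>
      exact ⟨(LieSubalgebra.lieSpan ℂ (MonoidAlgebra ℂ G) (MonoidAlgebra.of ℂ G '' S)).smul_mem r ha.1, fun y hy => by rw [smul_lie, ha.2 y hy, smul_zero]⟩
end

section
/- Let G be a finite group and S a nonempty subset of G consisting of elements of order 2. Then S and its conjugation closure ConjClo(S) generate the same Lie subalgebra of ℂ[G] under the commutator bracket. -/
/-- The conjugation closure of a subset `S` of a group: the smallest subset of `G`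
containing `S` and closed under `(g, h) ↦ g * h * g⁻¹` for `g, h` in the set. -/
inductive ConjClo {G : Type*} [Group G] (S : Set G) : G → Prop
  | base {s : G} : s ∈ S → ConjClo S s
  | conj {g h : G} : ConjClo S g → ConjClo S h → ConjClo S (g * h * g⁻¹)

attribute [local instance 100] LieRing.ofAssociativeRing

/-- Let `G` be a finite group and `S` a nonempty subset of `G` consisting of
elements of order 2.  Then `S` and its conjugation closure generate the same Lie subalgebra of
`ℂ[G]` under the commutator bracket. -/
theorem stmt5 {G : Type*} [Group G] [Fintype G] (S : Set G)
    (hne : S.Nonempty)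
    (h2 : ∀ s ∈ S, orderOf s = 2) :
    LieSubalgebra.lieSpan ℂ (MonoidAlgebra ℂ G) (MonoidAlgebra.of ℂ G '' S) =
      LieSubalgebra.lieSpan ℂ (MonoidAlgebra ℂ G)
        (MonoidAlgebra.of ℂ G '' {g : G | ConjClo S g}) := by
  set φ := MonoidAlgebra.of ℂ G with hφ
  set K := LieSubalgebra.lieSpan ℂ (MonoidAlgebra ℂ G) (φ '' S) with hK
  haveI : Fact (Nat.Prime 2) := ⟨Nat.prime_two⟩
  have key : ∀ g : G, ConjClo S g → orderOf g = 2 ∧ φ g ∈ K := by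
    intro g hg
    induction hg with
    | base hs =>
        exact ⟨h2 _ hs, LieSubalgebra.subset_lieSpan ⟨_, hs, rfl⟩⟩
    | @conj g h hcg hch ihg ihh =>
        obtain ⟨og, mg⟩ := ihg
        obtain ⟨oh, mh⟩ := ihh
        have hg2 : g * g = 1 := by
          have := pow_orderOf_eq_one g
          rwa [og, sq] at this
        have hh2 : h * h = 1 := by
          have := pow_orderOf_eq_one h
          rwa [oh, sq] at this
        have hh1 : h ≠ 1 := by
          intro e; rw [e] at oh; simp at oh
        have hx2 : (g * h * g⁻¹) ^ 2 = 1 := by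
          have e : (g * h * g⁻¹) * (g * h * g⁻¹) = g * (h * h) * g⁻¹ := by group
          rw [sq, e, hh2, mul_one, mul_inv_cancel]
        have hx1 : g * h * g⁻¹ ≠ 1 := by
          intro e
          apply hh1
          have : h = g⁻¹ * (g * h * g⁻¹) * g := by group
          rw [e] at this; simpa using this
        refine ⟨orderOf_eq_prime hx2 hx1, ?_⟩
        have hginv : g⁻¹ = g := inv_eq_of_mul_eq_one_right hg2
        set s := φ g with hs
        set t := φ h with ht
        have hs2 : s * s = 1 := by rw [hs, ← map_mul, hg2, map_one]
        have himg : φ (g * h * g⁻¹) = s * t * s := by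
          rw [hginv, map_mul, map_mul]
        rw [himg]
        have e : ⁅s, ⁅s, t⁆⁆ = t + t - (s * t * s + s * t * s) := by
          simp only [Ring.lie_def, mul_sub, sub_mul]
          rw [← mul_assoc s s t, hs2, one_mul, mul_assoc t s s, hs2, mul_one,
            ← mul_assoc s t s]
          abel
        have eq1 : s * t * s = t - (2 : ℂ)⁻¹ • ⁅s, ⁅s, t⁆⁆ := by
          rw [e]
          match_scalars <;> ring
        rw [eq1]
        exact K.sub_mem mh (K.smul_mem _ (K.lie_mem mg (K.lie_mem mg mh)))
  apply le_antisymm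
  · apply LieSubalgebra.lieSpan_mono
    exact Set.image_mono (fun x hx => ConjClo.base hx)
  · rw [LieSubalgebra.lieSpan_le]
    rintro x ⟨g, hg, rfl⟩
    exact (key g hg).2
end

section
/- Let G be a finite group, S a nonempty generating set of G of order-2 elements that is a union of conjugacy classes, g the Lie subalgebra of ℂ[G] generated by S, and κ: G → {±1} a group homomorphism with κ(s) = −1 for all s ∈ S. If V is a ℂ[G]-module, then the restriction to g of V* ⊗ κ is isomorphic, as a g-module, to the Lie-algebraic dual V^{*,Lie} of the restriction of V to g. -/
/-- The dual representation of `ρ` twisted by a linear character `κ : G →* ℂ`: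
`g` acts on `φ ∈ V*` by `κ(g) · (g.φ)`, where `(g.φ)(v) = φ(g⁻¹.v)`. -/
noncomputable def twistedDual {G V : Type*} [Group G] [AddCommGroup V] [Module ℂ V]
    (ρ : Representation ℂ G V) (κ : G →* ℂ) :
    Representation ℂ G (Module.Dual ℂ V) where
  toFun g := κ g • ρ.dual g
  map_one' := by
    simp only [map_one, one_smul]
  map_mul' g h := by
    simp only [map_mul, mul_smul, smul_mul_assoc, mul_smul_comm]
    rw [smul_comm]

attribute [local instance] LieRing.ofAssociativeRing

/-- Let `G` be a finite group, `S` a nonempty generating set of `G` of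
order-2 elements that is a union of conjugacy classes, `𝔤` the Lie subalgebra of `ℂ[G]`
generated by `S`, and `κ : G → {±1}` a group homomorphism with `κ(s) = −1` for all `s ∈ S`.
If `V` is a `ℂ[G]`-module, then the restriction to `𝔤` of `V* ⊗ κ` is isomorphic, as a
`𝔤`-module, to the Lie-algebraic (contragredient) dual of the restriction of `V` to `𝔤`. -/
theorem stmt6 {G : Type*} [Group G] [Fintype G] (S : Set G)
    (hne : S.Nonempty)
    (hgen : Subgroup.closure S = ⊤)
    (h2 : ∀ s ∈ S, orderOf s = 2)
    (hconj : ∀ s ∈ S, ∀ g : G, g * s * g⁻¹ ∈ S)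
    (κ : G →* ℂ)
    (hκ : ∀ g : G, κ g = 1 ∨ κ g = -1)
    (hκS : ∀ s ∈ S, κ s = -1)
    (V : Type*) [AddCommGroup V] [Module ℂ V]
    (ρ : Representation ℂ G V) :
    ∃ e : Module.Dual ℂ V ≃ₗ[ℂ] Module.Dual ℂ V,
      ∀ x ∈ LieSubalgebra.lieSpan ℂ (MonoidAlgebra ℂ G) (MonoidAlgebra.of ℂ G '' S),
        ∀ φ : Module.Dual ℂ V,
          e ((twistedDual ρ κ).asAlgebraHom x φ) = -((e φ).comp (ρ.asAlgebraHom x)) := by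
  set σ := (twistedDual ρ κ).asAlgebraHom with hσ
  set ρ' := ρ.asAlgebraHom with hρ'
  let L : LieSubalgebra ℂ (MonoidAlgebra ℂ G) :=
  { carrier := {x | ∀ φ : Module.Dual ℂ V, σ x φ = -(φ.comp (ρ' x))}
    zero_mem' := by intro φ; ext v; simp
    add_mem' := by
      intro x y hx hy φ
      replace hx : ∀ ψ : Module.Dual ℂ V, σ x ψ = -(ψ.comp (ρ' x)) := hx
      replace hy : ∀ ψ : Module.Dual ℂ V, σ y ψ = -(ψ.comp (ρ' y)) := hy
      ext v
      simp [hx, hy]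
      ring
    smul_mem' := by
      intro c x hx φ
      replace hx : ∀ ψ : Module.Dual ℂ V, σ x ψ = -(ψ.comp (ρ' x)) := hx
      ext v
      simp [hx]
    lie_mem' := by
      intro x y hx hy φ
      replace hx : ∀ ψ : Module.Dual ℂ V, σ x ψ = -(ψ.comp (ρ' x)) := hx
      replace hy : ∀ ψ : Module.Dual ℂ V, σ y ψ = -(ψ.comp (ρ' y)) := hy
      ext v
      simp [Ring.lie_def, Module.End.mul_apply, hx, hy] }
  refine ⟨LinearEquiv.refl ℂ _, fun x hx φ => ?_⟩
  have hle : LieSubalgebra.lieSpan ℂ (MonoidAlgebra ℂ G) (MonoidAlgebra.of ℂ G '' S) ≤ L := by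
    apply LieSubalgebra.lieSpan_le.mpr
    rintro _ ⟨s, hs, rfl⟩ φ
    have hs2 : s⁻¹ = s := by
      have := pow_orderOf_eq_one s
      rw [h2 s hs] at this
      rw [pow_two] at this
      exact inv_eq_of_mul_eq_one_right this
    have h1 : σ (MonoidAlgebra.of ℂ G s) = κ s • ρ.dual s := by
      rw [hσ]
      simp [Representation.asAlgebraHom_of, twistedDual]
    have h2' : ρ' (MonoidAlgebra.of ℂ G s) = ρ s := by
      rw [hρ']; simp [Representation.asAlgebraHom_of]
    rw [h1, h2', hκS s hs]
    simp only [LinearMap.smul_apply, Representation.dual_apply, hs2]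
    ext v
    simp [Module.Dual.transpose]
  exact hle hx φ
end

section
/- Let G be a finite group, S a nonempty generating set of G of order-2 elements that is a union of conjugacy classes, and g the Lie subalgebra of ℂ[G] generated by S. If V is a simple ℂ[G]-module, then V is simple as a module over g, and also simple as a module over the derived subalgebra g' = [g,g]. -/
attribute [local instance 100] LieRing.ofAssociativeRing
attribute [local instance 100] LieAlgebra.ofAssociativeAlgebra

/-- Let `G` be a finite group, `S` a nonempty generating set of `G` of
order-2 elements that is a union of conjugacy classes, and `𝔤` the Lie subalgebra of `ℂ[G]`
generated by `S`.  If `V` is a simple `ℂ[G]`-module (given here by an irreducible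
representation `ρ`), then `V` is simple as a module over `𝔤`, and also simple as a module over
the derived subalgebra `𝔤' = [𝔤,𝔤]`. -/
theorem stmt7 {G : Type*} [Group G] [Fintype G] (S : Set G)
    (hne : S.Nonempty)
    (hgen : Subgroup.closure S = ⊤)
    (h2 : ∀ s ∈ S, orderOf s = 2)
    (hconj : ∀ s ∈ S, ∀ g : G, g * s * g⁻¹ ∈ S)
    (V : Type*) [AddCommGroup V] [Module ℂ V] [Nontrivial V]
    (ρ : Representation ℂ G V)
    (hsimple : ∀ W : Submodule ℂ V, (∀ g : G, ∀ v ∈ W, ρ g v ∈ W) → W = ⊥ ∨ W = ⊤)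
    (K : LieSubalgebra ℂ (MonoidAlgebra ℂ G))
    (hK : K = LieSubalgebra.lieSpan ℂ (MonoidAlgebra ℂ G) (MonoidAlgebra.of ℂ G '' S))
    (K' : LieSubalgebra ℂ (MonoidAlgebra ℂ G))
    (hK' : K' = LieSubalgebra.lieSpan ℂ (MonoidAlgebra ℂ G)
      {z : MonoidAlgebra ℂ G | ∃ x ∈ K, ∃ y ∈ K, z = ⁅x, y⁆}) :
    (∀ W : Submodule ℂ V, (∀ x ∈ K, ∀ v ∈ W, ρ.asAlgebraHom x v ∈ W) → W = ⊥ ∨ W = ⊤) ∧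
    (∀ W : Submodule ℂ V, (∀ x ∈ K', ∀ v ∈ W, ρ.asAlgebraHom x v ∈ W) → W = ⊥ ∨ W = ⊤) := by
  classical
  have hsq : ∀ s ∈ S, s * s = 1 := by
    intro s hs
    have h := pow_orderOf_eq_one s
    rwa [h2 s hs, pow_two] at h
  have hinv : ∀ s ∈ S, s⁻¹ = s := fun s hs => inv_eq_of_mul_eq_one_right (hsq s hs)
  -- S-invariance implies bot-or-top
  have main : ∀ W : Submodule ℂ V, (∀ s ∈ S, ∀ v ∈ W, ρ s v ∈ W) → W = ⊥ ∨ W = ⊤ := by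
    intro W hW
    apply hsimple
    intro g v hv
    have hg : g ∈ Subgroup.closure S := by rw [hgen]; trivial
    have key : ∀ x ∈ Subgroup.closure S,
        (∀ v ∈ W, ρ x v ∈ W) ∧ (∀ v ∈ W, ρ x⁻¹ v ∈ W) := by
      intro x hx
      induction hx using Subgroup.closure_induction with
      | mem s hs =>
        refine ⟨hW s hs, ?_⟩
        rw [hinv s hs]; exact hW s hs
      | one => simp only [map_one, inv_one]; exact ⟨fun v hv => by simpa using hv,
          fun v hv => by simpa using hv⟩
      | mul a b ha hb iha ihb =>
        refine ⟨fun v hv => ?_, fun v hv => ?_⟩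
        · rw [map_mul, Module.End.mul_apply]
          exact iha.1 _ (ihb.1 v hv)
        · rw [mul_inv_rev, map_mul, Module.End.mul_apply]
          exact ihb.2 _ (iha.2 v hv)
      | inv a ha iha =>
        exact ⟨iha.2, by rw [inv_inv]; exact iha.1⟩
    exact (key g hg).1 v hv
  have hofS : ∀ s ∈ S, MonoidAlgebra.of ℂ G s ∈ K := by
    intro s hs
    rw [hK]
    exact LieSubalgebra.subset_lieSpan ⟨s, hs, rfl⟩
  -- double brackets: sts - t ∈ K'
  have hbr : ∀ s ∈ S, ∀ t ∈ S,
      MonoidAlgebra.of ℂ G (s * t * s) - MonoidAlgebra.of ℂ G t ∈ K' := by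
    intro s hs t ht
    set a := MonoidAlgebra.of ℂ G s with ha
    set b := MonoidAlgebra.of ℂ G t with hb
    have h1 : ⁅a, b⁆ ∈ K := K.lie_mem (hofS s hs) (hofS t ht)
    have h2' : ⁅a, ⁅a, b⁆⁆ ∈ K' := by
      rw [hK']
      exact LieSubalgebra.subset_lieSpan ⟨a, hofS s hs, ⁅a, b⁆, h1, rfl⟩
    have haa : a * a = 1 := by
      rw [ha, ← map_mul, hsq s hs, map_one]
    have heq : MonoidAlgebra.of ℂ G (s * t * s) - b
        = (-(1/2) : ℂ) • ⁅a, ⁅a, b⁆⁆ := by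
      have e1 : a * (a * b) = b := by rw [← mul_assoc, haa, one_mul]
      have e2 : b * a * a = b := by rw [mul_assoc, haa, mul_one]
      have e3 : MonoidAlgebra.of ℂ G (s * t * s) = a * b * a := by
        rw [ha, hb, ← map_mul, ← map_mul]
      rw [e3]
      simp only [Ring.lie_def, mul_sub, sub_mul, e1, e2, ← mul_assoc]
      module
    rw [heq]
    exact K'.smul_mem _ h2'
  -- conjugation differences lie in K'
  have hC : ∀ g : G, ∀ s ∈ S,
      MonoidAlgebra.of ℂ G (g * s * g⁻¹) - MonoidAlgebra.of ℂ G s ∈ K' := by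
    have key : ∀ g ∈ Subgroup.closure S, ∀ s ∈ S,
        MonoidAlgebra.of ℂ G (g * s * g⁻¹) - MonoidAlgebra.of ℂ G s ∈ K' := by
      intro g hg
      induction hg using Subgroup.closure_induction with
      | mem t ht =>
        intro s hs
        rw [hinv t ht]
        exact hbr t ht s hs
      | one =>
        intro s hs
        simp only [one_mul, inv_one, mul_one, sub_self]
        exact K'.zero_mem
      | mul a b ha hb iha ihb =>
        intro s hs
        have hbs : b * s * b⁻¹ ∈ S := hconj s hs b
        have e : (a * b) * s * (a * b)⁻¹ = a * (b * s * b⁻¹) * a⁻¹ := by group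
        rw [e, show MonoidAlgebra.of ℂ G (a * (b * s * b⁻¹) * a⁻¹) - MonoidAlgebra.of ℂ G s
          = (MonoidAlgebra.of ℂ G (a * (b * s * b⁻¹) * a⁻¹)
              - MonoidAlgebra.of ℂ G (b * s * b⁻¹))
            + (MonoidAlgebra.of ℂ G (b * s * b⁻¹) - MonoidAlgebra.of ℂ G s) from
          (sub_add_sub_cancel _ _ _).symm]
        exact K'.add_mem (iha _ hbs) (ihb s hs)
      | inv a ha iha =>
        intro s hs
        have hu : a⁻¹ * s * a⁻¹⁻¹ ∈ S := hconj s hs a⁻¹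
        have h := iha _ hu
        have e : a * (a⁻¹ * s * a⁻¹⁻¹) * a⁻¹ = s := by group
        rw [e] at h
        rw [show MonoidAlgebra.of ℂ G (a⁻¹ * s * a⁻¹⁻¹) - MonoidAlgebra.of ℂ G s
          = -(MonoidAlgebra.of ℂ G s - MonoidAlgebra.of ℂ G (a⁻¹ * s * a⁻¹⁻¹)) from
          (neg_sub _ _).symm]
        exact K'.neg_mem h
    intro g s hs
    exact key g (by rw [hgen]; trivial) s hs
  -- finite dimensionality
  have hfd : FiniteDimensional ℂ V := by
    obtain ⟨v₀, hv₀⟩ := exists_ne (0 : V)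
    set W₀ := Submodule.span ℂ (Set.range fun g : G => ρ g v₀) with hW₀def
    have hWinv : ∀ g : G, ∀ v ∈ W₀, ρ g v ∈ W₀ := by
      intro g v hv
      induction hv using Submodule.span_induction with
      | mem x hx =>
        obtain ⟨h, rfl⟩ := hx
        refine Submodule.subset_span ⟨g * h, ?_⟩
        show ρ (g * h) v₀ = ρ g (ρ h v₀)
        rw [map_mul, Module.End.mul_apply]
      | zero => simp only [map_zero]; exact W₀.zero_mem
      | add x y _ _ hx hy => rw [map_add]; exact W₀.add_mem hx hy
      | smul c x _ hx => rw [map_smul]; exact W₀.smul_mem c hx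
    have hW0 : W₀ = ⊤ := by
      rcases hsimple W₀ hWinv with h | h
      · exfalso
        apply hv₀
        have hm : v₀ ∈ W₀ := Submodule.subset_span ⟨1, by simp⟩
        rw [h] at hm
        simpa using hm
      · exact h
    refine ⟨⟨(Set.finite_range fun g : G => ρ g v₀).toFinset, ?_⟩⟩
    rw [Set.Finite.coe_toFinset, ← hW₀def, hW0]
  refine ⟨?_, ?_⟩
  · -- simplicity over K
    intro W hW
    apply main W
    intro s hs v hv
    have h := hW (MonoidAlgebra.of ℂ G s) (hofS s hs) v hv
    rwa [ρ.asAlgebraHom_of] at h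
  · -- simplicity over K'
    intro W hW
    apply main W
    intro s hs v hv
    set T : Module.End ℂ V := ∑ g : G, ρ (g * s * g⁻¹) with hT
    have hcomm : ∀ h : G, ρ h * T = T * ρ h := by
      intro h
      rw [hT, Finset.mul_sum, Finset.sum_mul]
      simp only [← map_mul]
      apply Fintype.sum_equiv (Equiv.mulLeft h)
      intro g
      congr 1
      simp only [Equiv.coe_mulLeft]
      group
    have hscal : ∃ c : ℂ, ∀ v : V, T v = c • v := by
      obtain ⟨c, hc⟩ := Module.End.exists_eigenvalue T
      refine ⟨c, ?_⟩
      have hE : ∀ g : G, ∀ v ∈ T.eigenspace c, ρ g v ∈ T.eigenspace c := by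
        intro g v hv
        rw [Module.End.mem_eigenspace_iff] at hv ⊢
        have h := congrArg (fun f : Module.End ℂ V => f v) (hcomm g)
        simp only [Module.End.mul_apply] at h
        rw [← h, hv, map_smul]
      rcases hsimple _ hE with h | h
      · exact absurd h hc
      · intro w
        have hw : w ∈ T.eigenspace c := h ▸ Submodule.mem_top
        exact Module.End.mem_eigenspace_iff.mp hw
    obtain ⟨c, hc⟩ := hscal
    have hdiff : ∀ g : G, ρ (g * s * g⁻¹) v - ρ s v ∈ W := by
      intro g
      have hx := hW _ (hC g s hs) v hv
      rwa [map_sub, ρ.asAlgebraHom_of, ρ.asAlgebraHom_of, LinearMap.sub_apply] at hx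
    have hsum : ∑ g : G, (ρ (g * s * g⁻¹) v - ρ s v) ∈ W :=
      Submodule.sum_mem _ fun g _ => hdiff g
    have hTv : T v = ∑ g : G, ρ (g * s * g⁻¹) v := by
      rw [hT, LinearMap.sum_apply]
    have key : (Fintype.card G : ℂ) • ρ s v
        = c • v - ∑ g : G, (ρ (g * s * g⁻¹) v - ρ s v) := by
      rw [← hc v, hTv, Finset.sum_sub_distrib, Finset.sum_const, Finset.card_univ,
        Nat.cast_smul_eq_nsmul]
      abel
    have hmem : (Fintype.card G : ℂ) • ρ s v ∈ W := by
      rw [key]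
      exact W.sub_mem (W.smul_mem c hv) hsum
    have hcard : (Fintype.card G : ℂ) ≠ 0 := Nat.cast_ne_zero.mpr Fintype.card_ne_zero
    have h := W.smul_mem (Fintype.card G : ℂ)⁻¹ hmem
    rwa [smul_smul, inv_mul_cancel₀ hcard, one_smul] at h
end

section
/- Let n ≥ 6 and let {λ,μ} be an unordered pair of nonempty partitions with |λ|+|μ| = n, λ ≠ μ, {λ,μ} not an arm and leg, and {λ,μ} ≠ {λ*,μ*}. If ν ≺ λ, {ν,μ} ≺ {λ,μ}, and also {ν*,μ*} ≺ {λ,μ}, then {ν,μ} = {ν*,μ*}; moreover either (ν = μ* and μ* ≺ λ), or (ν = ν* and μ = μ*). -/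
/-- The one-row Young diagram `[m]`. -/
def rowDiag (m : ℕ) : YoungDiagram :=
  YoungDiagram.ofRowLens [m] (List.sortedGE_iff_pairwise.mpr (List.pairwise_singleton _ m))

/-- The one-column Young diagram `[1^m]`. -/
def colDiag (m : ℕ) : YoungDiagram := (rowDiag m).transpose

/-- `ν ≺ λ`: the Young diagram `ν` is obtained from `λ` by removing one box. -/
def PrecD (ν lam : YoungDiagram) : Prop := ν ≤ lam ∧ ν.card + 1 = lam.card

/-- `(ν,τ) ≺ (λ,μ)` for ordered pairs of partitions:
either `ν ≺ λ` and `τ = μ`, or `ν = λ` and `τ ≺ μ`. -/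
def PairPrec (p q : YoungDiagram × YoungDiagram) : Prop :=
  (PrecD p.1 q.1 ∧ p.2 = q.2) ∨ (p.1 = q.1 ∧ PrecD p.2 q.2)

/-- `{ν,τ} ≺ {λ,μ}` for unordered pairs: `(ν,τ) ≺ (λ,μ)` or `(ν,τ) ≺ (μ,λ)`. -/
def UPrec (p q : YoungDiagram × YoungDiagram) : Prop :=
  PairPrec p q ∨ PairPrec p (q.2, q.1)

/-- Equality of the unordered pairs underlying two ordered pairs. -/
def UPairEq (p q : YoungDiagram × YoungDiagram) : Prop := p = q ∨ p = (q.2, q.1)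

/-- `p` is an arm-and-leg pair for `n`, i.e. of the form `{[n−d],[1^d]}`. -/
def IsArmLeg (n : ℕ) (p : YoungDiagram × YoungDiagram) : Prop :=
  ∃ d : ℕ, 1 ≤ d ∧ d ≤ n - 1 ∧
    ((p.1 = rowDiag (n - d) ∧ p.2 = colDiag d) ∨ (p.1 = colDiag d ∧ p.2 = rowDiag (n - d)))


theorem card_transpose' (μ : YoungDiagram) : μ.transpose.card = μ.card := by
  simp [YoungDiagram.transpose, YoungDiagram.card]

theorem sup_transpose' (μ ν : YoungDiagram) :
    (μ ⊔ ν).transpose = μ.transpose ⊔ ν.transpose := by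
  ext x; simp [YoungDiagram.mem_sup]

theorem yd_eq_of_le_of_card_le' {μ ν : YoungDiagram} (h : μ ≤ ν) (hc : ν.card ≤ μ.card) :
    μ = ν := by
  ext1
  exact Finset.eq_of_subset_of_card_le (YoungDiagram.cells_subset_iff.mpr h) hc

theorem key18 {ν lam : YoungDiagram} (h1 : PrecD ν lam) (h2 : PrecD ν.transpose lam)
    (hne : ν ≠ ν.transpose) : lam = lam.transpose := by
  obtain ⟨hle1, hc1⟩ := h1
  obtain ⟨hle2, hc2⟩ := h2
  set s := ν ⊔ ν.transpose with hsdef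
  have hsle : s ≤ lam := sup_le hle1 hle2
  have hcs : lam.card ≤ s.card := by
    by_contra h
    push_neg at h
    have hsν : ν = s := yd_eq_of_le_of_card_le' le_sup_left (by omega)
    have : ν.transpose = ν := by
      refine yd_eq_of_le_of_card_le' (le_sup_right.trans_eq hsν.symm) ?_
      rw [card_transpose']
    exact hne this.symm
  have hs : s = lam := yd_eq_of_le_of_card_le' hsle hcs
  calc lam = s := hs.symm
    _ = s.transpose := by
        rw [hsdef, sup_transpose', YoungDiagram.transpose_transpose, sup_comm]
    _ = lam.transpose := by rw [hs]

/-- Let `n ≥ 6` and let `{λ,μ}` be an unordered pair of nonempty partitions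
with `|λ|+|μ| = n`, `λ ≠ μ`, `{λ,μ}` not an arm and leg, and `{λ,μ} ≠ {λ*,μ*}`.  If `ν ≺ λ`,
`{ν,μ} ≺ {λ,μ}`, and also `{ν*,μ*} ≺ {λ,μ}`, then `{ν,μ} = {ν*,μ*}`; moreover either
(`ν = μ*` and `μ* ≺ λ`), or (`ν = ν*` and `μ = μ*`). -/
theorem stmt18 (n : ℕ) (hn : 6 ≤ n) (lam mu : YoungDiagram)
    (hcard : lam.card + mu.card = n)
    (hproper : lam ≠ ⊥ ∧ mu ≠ ⊥)
    (hne : lam ≠ mu)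
    (hAL : ¬ IsArmLeg n (lam, mu))
    (hsd : ¬ UPairEq (lam, mu) (lam.transpose, mu.transpose))
    (ν : YoungDiagram) (hν : PrecD ν lam)
    (h1 : UPrec (ν, mu) (lam, mu))
    (h2 : UPrec (ν.transpose, mu.transpose) (lam, mu)) :
    UPairEq (ν, mu) (ν.transpose, mu.transpose) ∧
      ((ν = mu.transpose ∧ PrecD mu.transpose lam) ∨
        (ν = ν.transpose ∧ mu = mu.transpose)) := by

  simp only [UPrec, PairPrec] at h2
  rcases h2 with (⟨hνt, hμt⟩ | ⟨hνt, hμt⟩) | (⟨hνt, hμt⟩ | ⟨hνt, hμt⟩)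
  · -- PrecD ν* λ, μ* = μ
    by_cases hvv : ν = ν.transpose
    · refine ⟨Or.inl (by rw [← hvv, hμt]), Or.inr ⟨hvv, hμt.symm⟩⟩
    · exact absurd (Or.inl (by simp [Prod.ext_iff, (key18 hν hνt hvv).symm, hμt])) hsd
  · -- ν* = λ : cardinality contradiction
    exfalso
    have := card_transpose' ν
    rw [hνt] at this
    have := hν.2
    omega
  · -- PrecD ν* μ, μ* = λ : contradicts hsd (λ,μ) = (μ*,λ*)
    exfalso
    apply hsd
    right
    have : mu = lam.transpose := by
      rw [← hμt, YoungDiagram.transpose_transpose]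
    exact Prod.ext hμt.symm this
  · -- ν* = μ, μ* ≺ λ
    have hνμ : ν = mu.transpose := by
      rw [← hνt, YoungDiagram.transpose_transpose]
    exact ⟨Or.inr (Prod.ext hνμ (by rw [hνt])), Or.inl ⟨hνμ, hμt⟩⟩
end
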